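/- arXiv:2110.01969 — 3 statements merged into one kernel-verified Lean document; each statement's English description precedes it below -/
import Mathlib

section
/- Let d ≥ 2, a ≥ -((d-2)/2)², μ_k = (d-2)/2 + k, ν_k = √(μ_k² + a), a_k = (μ_k + ν_k)/2 and b_k = (μ_k - ν_k)/2, regarded as smooth functions of the real variable k ≥ 1. Then |a_k| ≲ k, |da_k/dk| ≲ 1, |d^N a_k/dk^N| ≲ 1/k^N for 2 ≤ N ≤ ⌊(d-1)/2⌋ + 1, and |d^N b_k/dk^N| ≲ 1/k^{N+1} for 0 ≤ N ≤ ⌊(d-1)/2⌋ + 1. -/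
/-!
Write `μ = c + k` with `c = (d - 2)/2` and `ν = √(μ² + a)`, so that `a_k = (μ + εν)/2` with
`ε = 1` and `b_k` with `ε = -1`. Since `μ' = 1` and `ν' = μ/ν`, derivatives of the monomials
`μ^i ν^{-j}` are again combinations of monomials, with `i - j` lowered by one; as `k ≤ ν` and
`μ ≲ k`, a combination of monomials with `i - j = z` is `O(k^z)`. The identity `ν² - μ² = a` gives
`((μ + εν)/2)'' = εa/(2ν³)`, which is of degree `-3` rather than the naive `-1`; this is the source
of the gain in the higher derivatives. The bounds for `b_k` and `b_k'` come from
`b_k = -a/(2(μ + ν))` and `b_k' = -b_k/ν`.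
-/

/-- `a_k = (μ_k + ν_k)/2` with `μ_k = (d-2)/2 + k`, `ν_k = √(μ_k² + a)`,
viewed as a function of the real variable `k`. -/
noncomputable def aFun (d : ℕ) (a : ℝ) (k : ℝ) : ℝ :=
  ((((d:ℝ) - 2)/2 + k) + Real.sqrt ((((d:ℝ) - 2)/2 + k)^2 + a)) / 2

/-- `b_k = (μ_k - ν_k)/2`, viewed as a function of the real variable `k`. -/
noncomputable def bFun (d : ℕ) (a : ℝ) (k : ℝ) : ℝ :=
  ((((d:ℝ) - 2)/2 + k) - Real.sqrt ((((d:ℝ) - 2)/2 + k)^2 + a)) / 2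

open Set Filter Asymptotics

lemma zpow_isBigO_zpow_Ici_one {z w : ℤ} (h : z ≤ w) :
    (fun k : ℝ => k ^ z) =O[𝓟 (Ici 1)] (· ^ w) :=
  IsBigO.of_bound 1 <| eventually_principal.2 fun k (hk : 1 ≤ k) => by
    rw [one_mul, Real.norm_of_nonneg (by positivity), Real.norm_of_nonneg (by positivity)]
    exact zpow_le_zpow_right₀ hk h

lemma Asymptotics.IsBigO.eventually_abs_le_mul_zpow {f : ℝ → ℝ} {z : ℤ}
    (h : f =O[𝓟 (Ici 1)] (· ^ z)) :
    ∀ᶠ C in atTop, ∀ k, 1 ≤ k → |f k| ≤ C * k ^ z :=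
  (isBigO_iff_eventually_isBigOWith.1 h).mono fun C hC k hk => by
    simpa [abs_of_pos (zero_lt_one.trans_le hk : (0 : ℝ) < k)] using
      isBigOWith_principal.1 hC k hk

namespace SqrtShift

noncomputable def nu (c a k : ℝ) : ℝ := √((c + k) ^ 2 + a)

noncomputable def monomial (c a : ℝ) (i j : ℕ) (k : ℝ) : ℝ := (c + k) ^ i / nu c a k ^ j

noncomputable def homogeneous (c a : ℝ) (z : ℤ) : Submodule ℝ (ℝ → ℝ) :=
  Submodule.span ℝ {f | ∃ i j : ℕ, (i : ℤ) - j = z ∧ monomial c a i j = f}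

noncomputable def halfSum (c a ε k : ℝ) : ℝ := (c + k + ε * nu c a k) / 2

variable {c a : ℝ}

lemma sq_le_sq_add (hc : 0 ≤ c) (ha : -c ^ 2 ≤ a) {k : ℝ} (hk : 0 ≤ k) :
    k ^ 2 ≤ (c + k) ^ 2 + a := by
  nlinarith [mul_nonneg hc hk]

lemma le_nu (hc : 0 ≤ c) (ha : -c ^ 2 ≤ a) {k : ℝ} (hk : 0 ≤ k) : k ≤ nu c a k :=
  Real.le_sqrt_of_sq_le (sq_le_sq_add hc ha hk)

lemma nu_pos (hc : 0 ≤ c) (ha : -c ^ 2 ≤ a) {k : ℝ} (hk : 0 < k) : 0 < nu c a k :=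
  hk.trans_le (le_nu hc ha hk.le)

lemma nu_sq (hc : 0 ≤ c) (ha : -c ^ 2 ≤ a) {k : ℝ} (hk : 0 ≤ k) :
    nu c a k ^ 2 = (c + k) ^ 2 + a :=
  Real.sq_sqrt ((sq_nonneg k).trans (sq_le_sq_add hc ha hk))

lemma hasDerivAt_nu (hc : 0 ≤ c) (ha : -c ^ 2 ≤ a) {k : ℝ} (hk : 0 < k) :
    HasDerivAt (nu c a) ((c + k) / nu c a k) k := by
  have hpos : 0 < (c + k) ^ 2 + a := (pow_pos hk 2).trans_le (sq_le_sq_add hc ha hk.le)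
  have hsq : HasDerivAt (fun y => (c + y) ^ 2 + a) (2 * (c + k)) k := by
    simpa using (((hasDerivAt_id k).const_add c).pow 2).add_const a
  refine (hsq.sqrt hpos.ne').congr_deriv ?_
  rw [nu, mul_div_mul_left _ _ two_ne_zero]

lemma hasDerivAt_monomial (hc : 0 ≤ c) (ha : -c ^ 2 ≤ a) (i j : ℕ) {k : ℝ} (hk : 0 < k) :
    HasDerivAt (monomial c a i j)
      (i * monomial c a (i - 1) j k - j * monomial c a (i + 1) (j + 2) k) k := by
  have hν := nu_pos hc ha hk
  have hμ : HasDerivAt (fun y => (c + y) ^ i) (i * (c + k) ^ (i - 1)) k := by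
    simpa using ((hasDerivAt_id k).const_add c).fun_pow i
  refine (hμ.div ((hasDerivAt_nu hc ha hk).fun_pow j) (pow_ne_zero j hν.ne')).congr_deriv ?_
  simp only [monomial]
  rcases j with _ | j
  · simp
  · field_simp
    simp only [Nat.add_sub_cancel]
    ring

lemma const_add_isBigO_self (hc : 0 ≤ c) : (fun k => c + k) =O[𝓟 (Ici 1)] (fun k => k) :=
  IsBigO.of_bound (c + 1) <| eventually_principal.2 fun k (hk : 1 ≤ k) => by
    rw [Real.norm_eq_abs, Real.norm_eq_abs, abs_of_nonneg (by linarith),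
      abs_of_nonneg (by linarith)]
    nlinarith

lemma inv_nu_isBigO (hc : 0 ≤ c) (ha : -c ^ 2 ≤ a) :
    (fun k => (nu c a k)⁻¹) =O[𝓟 (Ici 1)] (fun k => k⁻¹) :=
  IsBigO.of_bound 1 <| eventually_principal.2 fun k (hk : 1 ≤ k) => by
    have hk0 : 0 < k := by linarith
    rw [one_mul, norm_inv, norm_inv, Real.norm_of_nonneg hk0.le,
      Real.norm_of_nonneg (nu_pos hc ha hk0).le]
    exact inv_anti₀ hk0 (le_nu hc ha hk0.le)

lemma monomial_isBigO (hc : 0 ≤ c) (ha : -c ^ 2 ≤ a) (i j : ℕ) :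
    monomial c a i j =O[𝓟 (Ici 1)] (· ^ ((i : ℤ) - j)) := by
  refine (((const_add_isBigO_self hc).pow i).mul ((inv_nu_isBigO hc ha).pow j)).congr' ?_ ?_
  · exact eventuallyEq_principal.2 fun k _ => by simp [monomial, div_eq_mul_inv]
  · refine eventuallyEq_principal.2 fun k (hk : 1 ≤ k) => ?_
    rw [zpow_sub₀ (by positivity), zpow_natCast, zpow_natCast, div_eq_mul_inv, inv_pow]

lemma monomial_mem_homogeneous (i j : ℕ) : monomial c a i j ∈ homogeneous c a ((i : ℤ) - j) :=
  Submodule.subset_span ⟨i, j, rfl, rfl⟩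

lemma isBigO_of_mem_homogeneous (hc : 0 ≤ c) (ha : -c ^ 2 ≤ a) {z : ℤ} {f : ℝ → ℝ}
    (hf : f ∈ homogeneous c a z) : f =O[𝓟 (Ici 1)] (· ^ z) := by
  induction hf using Submodule.span_induction with
  | mem f hf =>
    obtain ⟨i, j, rfl, rfl⟩ := hf
    exact monomial_isBigO hc ha i j
  | zero => exact isBigO_zero _ _
  | add f g _ _ hf hg => exact hf.add hg
  | smul r f _ hf => exact hf.const_smul_left r

lemma exists_hasDerivAt_of_mem_homogeneous (hc : 0 ≤ c) (ha : -c ^ 2 ≤ a) {z : ℤ}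
    {f : ℝ → ℝ} (hf : f ∈ homogeneous c a z) :
    ∃ g ∈ homogeneous c a (z - 1), ∀ k, 0 < k → HasDerivAt f (g k) k := by
  induction hf using Submodule.span_induction with
  | mem f hf =>
    obtain ⟨i, j, rfl, rfl⟩ := hf
    refine ⟨(i : ℝ) • monomial c a (i - 1) j - (j : ℝ) • monomial c a (i + 1) (j + 2),
      Submodule.sub_mem _ ?_ ?_, fun k hk => hasDerivAt_monomial hc ha i j hk⟩
    · rcases i with _ | i
      · simp
      · rw [Nat.add_sub_cancel]
        convert Submodule.smul_mem _ _ (monomial_mem_homogeneous (c := c) (a := a) i j) using 2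
        push_cast
        ring
    · convert Submodule.smul_mem _ _ (monomial_mem_homogeneous (c := c) (a := a) (i + 1) (j + 2))
        using 2
      push_cast
      ring
  | zero => exact ⟨0, zero_mem _, fun k _ => hasDerivAt_const k 0⟩
  | add f g _ _ hf hg =>
    obtain ⟨f', hf', hff'⟩ := hf
    obtain ⟨g', hg', hgg'⟩ := hg
    exact ⟨f' + g', add_mem hf' hg', fun k hk => (hff' k hk).add (hgg' k hk)⟩
  | smul r f _ hf =>
    obtain ⟨f', hf', hff'⟩ := hf
    exact ⟨r • f', Submodule.smul_mem _ r hf', fun k hk => (hff' k hk).const_smul r⟩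

lemma exists_eqOn_iteratedDeriv (hc : 0 ≤ c) (ha : -c ^ 2 ≤ a) {z : ℤ} {f g : ℝ → ℝ}
    (hg : g ∈ homogeneous c a z) (hfg : EqOn f g (Ioi 0)) (n : ℕ) :
    ∃ g' ∈ homogeneous c a (z - n), EqOn (iteratedDeriv n f) g' (Ioi 0) := by
  induction n with
  | zero => exact ⟨g, by simpa using hg, by simpa using hfg⟩
  | succ n ih =>
    obtain ⟨g', hg', hfg'⟩ := ih
    obtain ⟨g'', hg'', hder⟩ := exists_hasDerivAt_of_mem_homogeneous hc ha hg'
    refine ⟨g'', by convert hg'' using 2; push_cast; ring, fun k hk => ?_⟩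
    rw [iteratedDeriv_succ, hfg'.deriv isOpen_Ioi hk]
    exact (hder k hk).deriv

lemma isBigO_of_eqOn (hc : 0 ≤ c) (ha : -c ^ 2 ≤ a) {z : ℤ} {f g : ℝ → ℝ}
    (hg : g ∈ homogeneous c a z) (hfg : EqOn f g (Ioi 0)) : f =O[𝓟 (Ici 1)] (· ^ z) := by
  refine (isBigO_of_mem_homogeneous hc ha hg).congr' ?_ EventuallyEq.rfl
  exact eventuallyEq_principal.2 (hfg.mono fun k (hk : 1 ≤ k) => zero_lt_one.trans_le hk).symm

lemma iteratedDeriv_isBigO_of_eqOn (hc : 0 ≤ c) (ha : -c ^ 2 ≤ a) {z : ℤ} {f g : ℝ → ℝ}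
    (hg : g ∈ homogeneous c a z) (hfg : EqOn f g (Ioi 0)) (n : ℕ) :
    iteratedDeriv n f =O[𝓟 (Ici 1)] (· ^ (z - n)) := by
  obtain ⟨g', hg', hfg'⟩ := exists_eqOn_iteratedDeriv hc ha hg hfg n
  exact isBigO_of_eqOn hc ha hg' hfg'

lemma hasDerivAt_halfSum (hc : 0 ≤ c) (ha : -c ^ 2 ≤ a) (ε : ℝ) {k : ℝ} (hk : 0 < k) :
    HasDerivAt (halfSum c a ε) ((1 + ε * monomial c a 1 1 k) / 2) k := by
  refine ((((hasDerivAt_id k).const_add c).add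
    ((hasDerivAt_nu hc ha hk).const_mul ε)).div_const 2).congr_deriv ?_
  simp [monomial]

lemma monomial_zero_one_sub_monomial_two_three (hc : 0 ≤ c) (ha : -c ^ 2 ≤ a) {k : ℝ}
    (hk : 0 < k) : monomial c a 0 1 k - monomial c a 2 3 k = a * monomial c a 0 3 k := by
  have hν := nu_pos hc ha hk
  simp only [monomial]
  field_simp
  linear_combination nu_sq hc ha hk.le

lemma eqOn_deriv_deriv_halfSum (hc : 0 ≤ c) (ha : -c ^ 2 ≤ a) (ε : ℝ) :
    EqOn (deriv (deriv (halfSum c a ε))) ((ε * a / 2) • monomial c a 0 3) (Ioi 0) := by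
  have h : EqOn (deriv (halfSum c a ε)) (fun k => (1 + ε * monomial c a 1 1 k) / 2) (Ioi 0) :=
    fun k hk => (hasDerivAt_halfSum hc ha ε hk).deriv
  intro k hk
  rw [h.deriv isOpen_Ioi hk,
    ((((hasDerivAt_monomial hc ha 1 1 hk).const_mul ε).const_add 1).div_const 2).deriv]
  simp only [Nat.cast_one, one_mul, Nat.sub_self, Pi.smul_apply, smul_eq_mul]
  linear_combination ε / 2 * monomial_zero_one_sub_monomial_two_three hc ha hk

lemma deriv_halfSum_isBigO (hc : 0 ≤ c) (ha : -c ^ 2 ≤ a) (ε : ℝ) :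
    deriv (halfSum c a ε) =O[𝓟 (Ici 1)] (· ^ (0 : ℤ)) := by
  refine isBigO_of_eqOn hc ha (g := (2⁻¹ : ℝ) • (monomial c a 0 0 + ε • monomial c a 1 1))
    (Submodule.smul_mem _ _ (add_mem (monomial_mem_homogeneous 0 0)
      (Submodule.smul_mem _ _ (monomial_mem_homogeneous 1 1)))) fun k hk => ?_
  rw [(hasDerivAt_halfSum hc ha ε hk).deriv]
  simp only [Pi.smul_apply, Pi.add_apply, smul_eq_mul, monomial, pow_zero, div_one]
  ring

lemma iteratedDeriv_halfSum_isBigO (hc : 0 ≤ c) (ha : -c ^ 2 ≤ a) (ε : ℝ) {N : ℕ}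
    (hN : 2 ≤ N) :
    iteratedDeriv N (halfSum c a ε) =O[𝓟 (Ici 1)] (· ^ (-(N : ℤ) - 1)) := by
  obtain ⟨n, rfl⟩ := Nat.exists_eq_add_of_le' hN
  rw [iteratedDeriv_succ', iteratedDeriv_succ']
  convert iteratedDeriv_isBigO_of_eqOn hc ha
    (Submodule.smul_mem _ _ (monomial_mem_homogeneous 0 3)) (eqOn_deriv_deriv_halfSum hc ha ε) n
    using 3
  push_cast
  ring

lemma halfSum_neg_one_eq (hc : 0 ≤ c) (ha : -c ^ 2 ≤ a) {k : ℝ} (hk : 0 < k) :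
    halfSum c a (-1) k = -a / (2 * (c + k + nu c a k)) := by
  have := nu_pos hc ha hk
  rw [halfSum, eq_div_iff (by positivity)]
  linear_combination -(nu_sq hc ha hk.le)

lemma halfSum_neg_one_isBigO (hc : 0 ≤ c) (ha : -c ^ 2 ≤ a) :
    halfSum c a (-1) =O[𝓟 (Ici 1)] (· ^ (-1 : ℤ)) :=
  IsBigO.of_bound (|a| / 4) <| eventually_principal.2 fun k (hk : 1 ≤ k) => by
    have hk0 : 0 < k := by linarith
    have hν := le_nu hc ha hk0.le
    rw [halfSum_neg_one_eq hc ha hk0, norm_div, norm_neg, Real.norm_eq_abs,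
      Real.norm_of_nonneg (by linarith), zpow_neg_one, norm_inv, Real.norm_of_nonneg hk0.le,
      div_mul_eq_mul_div, ← div_eq_mul_inv, div_div]
    exact div_le_div_of_nonneg_left (abs_nonneg a) (by positivity) (by linarith)

lemma deriv_halfSum_neg_one_isBigO (hc : 0 ≤ c) (ha : -c ^ 2 ≤ a) :
    deriv (halfSum c a (-1)) =O[𝓟 (Ici 1)] (· ^ (-2 : ℤ)) := by
  refine ((halfSum_neg_one_isBigO hc ha).mul (monomial_isBigO hc ha 0 1)).neg_left.congr' ?_ ?_
  · refine eventuallyEq_principal.2 fun k (hk : 1 ≤ k) => ?_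
    have hk0 : 0 < k := by linarith
    have := nu_pos hc ha hk0
    rw [(hasDerivAt_halfSum hc ha (-1) hk0).deriv]
    simp only [monomial, halfSum]
    field_simp
    ring
  · refine eventuallyEq_principal.2 fun k (hk : 1 ≤ k) => ?_
    rw [← zpow_add₀ (by positivity)]
    norm_num

lemma iteratedDeriv_halfSum_neg_one_isBigO (hc : 0 ≤ c) (ha : -c ^ 2 ≤ a) :
    ∀ N : ℕ, iteratedDeriv N (halfSum c a (-1)) =O[𝓟 (Ici 1)] (· ^ (-(N : ℤ) - 1))
  | 0 => by simpa using halfSum_neg_one_isBigO hc ha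
  | 1 => by simpa using deriv_halfSum_neg_one_isBigO hc ha
  | N + 2 => iteratedDeriv_halfSum_isBigO hc ha (-1) le_add_self

lemma halfSum_one_isBigO (hc : 0 ≤ c) (ha : -c ^ 2 ≤ a) :
    halfSum c a 1 =O[𝓟 (Ici 1)] (· ^ (1 : ℤ)) := by
  have hb := (halfSum_neg_one_isBigO hc ha).trans
    (zpow_isBigO_zpow_Ici_one (w := 1) (by norm_num))
  refine ((const_add_isBigO_self hc).sub (hb.congr_right zpow_one)).congr (fun k => ?_)
    (fun k => (zpow_one k).symm)
  simp only [halfSum]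
  ring

lemma iteratedDeriv_halfSum_one_isBigO (hc : 0 ≤ c) (ha : -c ^ 2 ≤ a) {N : ℕ} (hN : 2 ≤ N) :
    iteratedDeriv N (halfSum c a 1) =O[𝓟 (Ici 1)] (· ^ (-(N : ℤ))) :=
  (iteratedDeriv_halfSum_isBigO hc ha 1 hN).trans (zpow_isBigO_zpow_Ici_one (by omega))

end SqrtShift

open SqrtShift in
/-- Estimates for `a_k`, `b_k` and their derivatives:
`|a_k| ≲ k`, `|a_k'| ≲ 1`, `|a_k^{(N)}| ≲ k^{-N}` for `2 ≤ N ≤ ⌊(d-1)/2⌋+1`, and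
`|b_k^{(N)}| ≲ k^{-(N+1)}` for `0 ≤ N ≤ ⌊(d-1)/2⌋+1`. -/
theorem aFun_bFun_derivative_estimates (d : ℕ) (hd : 2 ≤ d) (a : ℝ)
    (ha : -((((d:ℝ) - 2)/2)^2) ≤ a) :
    ∃ C : ℝ, 0 < C ∧ ∀ k : ℝ, 1 ≤ k →
      |aFun d a k| ≤ C * k ∧
      |deriv (aFun d a) k| ≤ C ∧
      (∀ N : ℕ, 2 ≤ N → N ≤ (d - 1)/2 + 1 →
        |iteratedDeriv N (aFun d a) k| ≤ C / k ^ N) ∧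
      (∀ N : ℕ, N ≤ (d - 1)/2 + 1 →
        |iteratedDeriv N (bFun d a) k| ≤ C / k ^ (N + 1)) := by
  have hc : 0 ≤ ((d : ℝ) - 2) / 2 := by
    have : (2 : ℝ) ≤ d := by exact_mod_cast hd
    linarith
  have hA : aFun d a = halfSum (((d : ℝ) - 2) / 2) a 1 := by
    funext k; simp [aFun, halfSum, nu]
  have hB : bFun d a = halfSum (((d : ℝ) - 2) / 2) a (-1) := by
    funext k; simp [bFun, halfSum, nu]; ring
  rw [hA, hB]
  have h₀ := (halfSum_one_isBigO hc ha).eventually_abs_le_mul_zpow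
  have h₁ := (deriv_halfSum_isBigO hc ha 1).eventually_abs_le_mul_zpow
  have h₂ := (Finset.Icc 2 ((d - 1) / 2 + 1)).eventually_all.2 fun N hN =>
    (iteratedDeriv_halfSum_one_isBigO hc ha (Finset.mem_Icc.1 hN).1).eventually_abs_le_mul_zpow
  have h₃ := (Finset.Iic ((d - 1) / 2 + 1)).eventually_all.2 fun N _ =>
    (iteratedDeriv_halfSum_neg_one_isBigO hc ha N).eventually_abs_le_mul_zpow
  obtain ⟨C, hC, h₀, h₁, h₂, h₃⟩ :=
    ((eventually_gt_atTop 0).and (h₀.and (h₁.and (h₂.and h₃)))).exists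
  refine ⟨C, hC, fun k hk => ⟨by simpa using h₀ k hk, by simpa using h₁ k hk,
    fun N hN hNM => ?_, fun N hNM => ?_⟩⟩
  · simpa [div_eq_mul_inv] using h₂ N (Finset.mem_Icc.2 ⟨hN, hNM⟩) k hk
  · have h := h₃ N (Finset.mem_Iic.2 hNM) k hk
    rwa [← neg_add', ← Nat.cast_add_one, zpow_neg, zpow_natCast, ← div_eq_mul_inv] at h
end

section
/- Let (F_k)_{k≥0} and (G_k)_{k≥0} be bounded complex sequences, let N be a positive integer, and suppose sup_k k^m |Δ^m F_k| ≤ A for all 1 ≤ m ≤ N, and sup_j 2^{j(m-1)} Σ_{k=2^j}^{2^{j+1}} |Δ^m G_k| ≤ B for all 1 ≤ m ≤ N. Then the product sequence C_k = F_k G_k satisfies sup_j 2^{j(N-1)} Σ_{k=2^j}^{2^{j+1}} |Δ^N C_k| ≲_{N,A,B} 1. -/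
/-- Forward finite difference operator on complex sequences. -/
def fdC (s : ℕ → ℂ) : ℕ → ℂ := fun k => s (k + 1) - s k

/-!
By the discrete Leibniz rule, `Δ^N (F G)_k = ∑_{i + l = N} (N choose i) Δ^i F_{k+l} Δ^l G_k`.
On the dyadic block `2^j ≤ k ≤ 2^(j+1)` the hypothesis on `F` gives `|Δ^i F_{k+l}| ≤ A 2^(-j i)`.
For `l ≥ 1` the hypothesis on `G` bounds the block sum of `|Δ^l G|` by `B 2^(-j (l-1))`, and the
powers of `2` cancel exactly against `2^(j (N-1))`. For `l = 0` one uses `|G| ≤ B` instead, and the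
block has at most `2^(j+1)` points. Each term is thus at most `2 A B`, and the weights sum to `2^N`.
-/

open Finset fwdDiff

theorem fwdDiff_iter_mul_eq_sum_antidiagonal {R : Type*} [NonUnitalRing R] (f g : ℕ → R)
    (n k : ℕ) :
    (Δ_[1])^[n] (f * g) k = ∑ ij ∈ antidiagonal n,
      n.choose ij.1 • ((Δ_[1])^[ij.1] f (k + ij.2) * (Δ_[1])^[ij.2] g k) := by
  induction n generalizing k with
  | zero => simp
  | succ n ih =>
    let T i j := (Δ_[1])^[i] f (k + j) * (Δ_[1])^[j] g k
    calc (Δ_[1])^[n + 1] (f * g) k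
        = ∑ ij ∈ antidiagonal n, n.choose ij.1 • (T ij.1 (ij.2 + 1) + T (ij.1 + 1) ij.2) := by
          rw [Function.iterate_succ_apply', fwdDiff, ih, ih, ← sum_sub_distrib]
          refine sum_congr rfl fun ij _ => ?_
          rw [← smul_sub]
          congr 1
          simp only [T, Function.iterate_succ_apply', fwdDiff, add_right_comm k 1, ← add_assoc]
          noncomm_ring
      _ = ∑ ij ∈ antidiagonal (n + 1), (n + 1).choose ij.1 • T ij.1 ij.2 := by
          rw [sum_antidiagonal_choose_succ_nsmul T]
          simp only [smul_add, sum_add_distrib]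
          congr 1
          refine sum_congr rfl fun ij hij => ?_
          rw [Nat.choose_symm_of_eq_add (mem_antidiagonal.mp hij).symm]

theorem norm_fwdDiff_iter_mul_le {R : Type*} [NonUnitalSeminormedRing R] (f g : ℕ → R)
    (n k : ℕ) :
    ‖(Δ_[1])^[n] (f * g) k‖ ≤ ∑ ij ∈ antidiagonal n,
      n.choose ij.1 * (‖(Δ_[1])^[ij.1] f (k + ij.2)‖ * ‖(Δ_[1])^[ij.2] g k‖) := by
  rw [fwdDiff_iter_mul_eq_sum_antidiagonal]
  refine (norm_sum_le _ _).trans (sum_le_sum fun ij _ => (norm_nsmul_le ..).trans ?_)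
  gcongr
  exact norm_mul_le ..

theorem sum_antidiagonal_choose (n : ℕ) : ∑ ij ∈ antidiagonal n, n.choose ij.1 = 2 ^ n := by
  rw [Nat.sum_antidiagonal_eq_sum_range_succ_mk, Nat.sum_range_choose]

abbrev dyadicBlock (j : ℕ) : Finset ℕ := Icc (2 ^ j) (2 ^ (j + 1))

theorem card_dyadicBlock_le (j : ℕ) : (#(dyadicBlock j) : ℝ) ≤ 2 ^ (j + 1) := by
  have hcard : #(dyadicBlock j) = 2 ^ j + 1 := by
    rw [Nat.card_Icc, pow_succ]
    have := Nat.one_le_two_pow (n := j)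
    omega
  rw [hcard, pow_succ]
  push_cast
  linarith [one_le_pow₀ (M₀ := ℝ) (n := j) one_le_two]

section DyadicEstimates

variable {E F : Type*} [SeminormedAddCommGroup E] [SeminormedAddCommGroup F]
  {u : ℕ → E} {v : ℕ → F} {A B : ℝ} {j : ℕ}

theorem two_pow_mul_norm_le_of_pow_mul_norm_le {m k : ℕ}
    (hu : (k : ℝ) ^ m * ‖u k‖ ≤ A) (hk : 2 ^ j ≤ k) : (2 : ℝ) ^ (j * m) * ‖u k‖ ≤ A := by
  refine le_trans ?_ hu
  rw [pow_mul]
  gcongr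
  exact_mod_cast hk

theorem dyadic_sum_norm_shift_mul_le {i l : ℕ} (hu : ∀ k : ℕ, (k : ℝ) ^ i * ‖u k‖ ≤ A)
    (hv : (2 : ℝ) ^ (j * (l - 1)) * ∑ k ∈ dyadicBlock j, ‖v k‖ ≤ B) (hl : 1 ≤ l) :
    (2 : ℝ) ^ (j * (i + l - 1)) * ∑ k ∈ dyadicBlock j, ‖u (k + l)‖ * ‖v k‖ ≤ A * B := by
  have hA : 0 ≤ A := (mul_nonneg (by positivity) (norm_nonneg _)).trans (hu 0)
  have hexp : j * (i + l - 1) = j * i + j * (l - 1) := by rw [← mul_add]; congr 1; omega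
  calc (2 : ℝ) ^ (j * (i + l - 1)) * ∑ k ∈ dyadicBlock j, ‖u (k + l)‖ * ‖v k‖
      = 2 ^ (j * (l - 1)) * ∑ k ∈ dyadicBlock j, 2 ^ (j * i) * ‖u (k + l)‖ * ‖v k‖ := by
        simp only [hexp, pow_add, mul_sum]
        exact sum_congr rfl fun _ _ => by ring
    _ ≤ 2 ^ (j * (l - 1)) * ∑ k ∈ dyadicBlock j, A * ‖v k‖ := by
        gcongr with k hk
        exact two_pow_mul_norm_le_of_pow_mul_norm_le (hu _)
          ((mem_Icc.mp hk).1.trans (Nat.le_add_right k l))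
    _ = A * (2 ^ (j * (l - 1)) * ∑ k ∈ dyadicBlock j, ‖v k‖) := by
        rw [← mul_sum]
        ring
    _ ≤ A * B := by gcongr

theorem dyadic_sum_norm_mul_le {n : ℕ} (hu : ∀ k : ℕ, (k : ℝ) ^ n * ‖u k‖ ≤ A)
    (hv : ∀ k, ‖v k‖ ≤ B) (hn : 1 ≤ n) :
    (2 : ℝ) ^ (j * (n - 1)) * ∑ k ∈ dyadicBlock j, ‖u k‖ * ‖v k‖ ≤ 2 * A * B := by
  have hA : 0 ≤ A := (mul_nonneg (by positivity) (norm_nonneg _)).trans (hu 0)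
  have hB : 0 ≤ B := (norm_nonneg _).trans (hv 0)
  have hexp : j * n = j + j * (n - 1) := by rw [add_comm, ← Nat.mul_succ]; congr 1; omega
  refine le_of_mul_le_mul_left ?_ (by positivity : (0 : ℝ) < 2 ^ j)
  calc (2 : ℝ) ^ j * (2 ^ (j * (n - 1)) * ∑ k ∈ dyadicBlock j, ‖u k‖ * ‖v k‖)
      = ∑ k ∈ dyadicBlock j, 2 ^ (j * n) * ‖u k‖ * ‖v k‖ := by
        simp only [hexp, pow_add, mul_sum]
        exact sum_congr rfl fun _ _ => by ring
    _ ≤ ∑ k ∈ dyadicBlock j, A * B := by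
        gcongr with k hk
        · exact two_pow_mul_norm_le_of_pow_mul_norm_le (hu k) (mem_Icc.mp hk).1
        · exact hv k
    _ ≤ 2 ^ (j + 1) * (A * B) := by
        rw [sum_const, nsmul_eq_mul]
        gcongr
        exact card_dyadicBlock_le j
    _ = 2 ^ j * (2 * A * B) := by ring

end DyadicEstimates

theorem dyadic_sum_norm_fwdDiff_iter_mul_le {R : Type*} [NonUnitalSeminormedRing R]
    {f g : ℕ → R} {A B : ℝ} {N : ℕ}
    (hf : ∀ m ≤ N, ∀ k : ℕ, (k : ℝ) ^ m * ‖(Δ_[1])^[m] f k‖ ≤ A) (hg₀ : ∀ k, ‖g k‖ ≤ B)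
    (hg : ∀ m, 1 ≤ m → m ≤ N → ∀ j : ℕ,
      (2 : ℝ) ^ (j * (m - 1)) * ∑ k ∈ dyadicBlock j, ‖(Δ_[1])^[m] g k‖ ≤ B)
    (hN : 1 ≤ N) (j : ℕ) :
    (2 : ℝ) ^ (j * (N - 1)) * ∑ k ∈ dyadicBlock j, ‖(Δ_[1])^[N] (f * g) k‖ ≤
      2 ^ (N + 1) * A * B := by
  have hA : 0 ≤ A := (mul_nonneg (by positivity) (norm_nonneg _)).trans (hf 0 (by omega) 0)
  have hB : 0 ≤ B := (norm_nonneg _).trans (hg₀ 0)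
  have hterm : ∀ il ∈ antidiagonal N, (2 : ℝ) ^ (j * (N - 1)) * ∑ k ∈ dyadicBlock j,
      ‖(Δ_[1])^[il.1] f (k + il.2)‖ * ‖(Δ_[1])^[il.2] g k‖ ≤ 2 * A * B := by
    rintro ⟨i, l⟩ hil
    obtain rfl : i + l = N := mem_antidiagonal.mp hil
    rcases Nat.eq_zero_or_pos l with rfl | hl
    · simpa using dyadic_sum_norm_mul_le (j := j) (hf i le_rfl) hg₀ hN
    · exact (dyadic_sum_norm_shift_mul_le (hf i (by omega)) (hg l hl le_add_self j) hl).trans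
        (by nlinarith)
  calc (2 : ℝ) ^ (j * (N - 1)) * ∑ k ∈ dyadicBlock j, ‖(Δ_[1])^[N] (f * g) k‖
      ≤ 2 ^ (j * (N - 1)) * ∑ k ∈ dyadicBlock j, ∑ il ∈ antidiagonal N,
          N.choose il.1 * (‖(Δ_[1])^[il.1] f (k + il.2)‖ * ‖(Δ_[1])^[il.2] g k‖) := by
        gcongr with k
        exact norm_fwdDiff_iter_mul_le f g N k
    _ = ∑ il ∈ antidiagonal N, N.choose il.1 * (2 ^ (j * (N - 1)) * ∑ k ∈ dyadicBlock j,
          ‖(Δ_[1])^[il.1] f (k + il.2)‖ * ‖(Δ_[1])^[il.2] g k‖) := by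
        simp only [sum_comm (s := dyadicBlock j), mul_sum]
        exact sum_congr rfl fun _ _ => sum_congr rfl fun _ _ => by ring
    _ ≤ ∑ il ∈ antidiagonal N, N.choose il.1 * (2 * A * B) :=
        sum_le_sum fun il hil => mul_le_mul_of_nonneg_left (hterm il hil) (by positivity)
    _ = 2 ^ (N + 1) * A * B := by
        rw [← sum_mul, ← Nat.cast_sum, sum_antidiagonal_choose]
        push_cast
        ring

/-- If `F` satisfies `sup_k k^m |Δ^m F_k| ≤ A` and `G` satisfies the dyadic bounds
`sup_j 2^{j(m-1)} Σ_{k=2^j}^{2^{j+1}} |Δ^m G_k| ≤ B` for `1 ≤ m ≤ N`, and both are bounded,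
then the product `C_k = F_k G_k` satisfies the dyadic bound of order `N`. -/
theorem product_finite_difference_dyadic (N : ℕ) (hN : 0 < N) (F G : ℕ → ℂ) (A B : ℝ)
    (hFbdd : ∀ k, ‖F k‖ ≤ A)
    (hGbdd : ∀ k, ‖G k‖ ≤ B)
    (hF : ∀ m : ℕ, 1 ≤ m → m ≤ N → ∀ k : ℕ, (k : ℝ) ^ m * ‖fdC^[m] F k‖ ≤ A)
    (hG : ∀ m : ℕ, 1 ≤ m → m ≤ N → ∀ j : ℕ,
      (2 : ℝ) ^ (j * (m - 1)) * ∑ k ∈ Finset.Icc (2 ^ j) (2 ^ (j + 1)), ‖fdC^[m] G k‖ ≤ B) :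
    ∃ K : ℝ, ∀ j : ℕ,
      (2 : ℝ) ^ (j * (N - 1)) *
        ∑ k ∈ Finset.Icc (2 ^ j) (2 ^ (j + 1)), ‖fdC^[N] (fun i => F i * G i) k‖ ≤ K := by
  have hF' : ∀ m ≤ N, ∀ k : ℕ, (k : ℝ) ^ m * ‖(Δ_[1])^[m] F k‖ ≤ A := by
    rintro (_ | m) hm k
    · simpa using hFbdd k
    · exact hF (m + 1) (by omega) hm k
  exact ⟨2 ^ (N + 1) * A * B, dyadic_sum_norm_fwdDiff_iter_mul_le hF' hGbdd hG hN⟩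
end

section
/- Asymptotics of the hypergeometric function near z = 1: if a, b, c are complex with Re(c - a - b) < 0 and c, a, b are not nonpositive integers, then lim_{z→1⁻} (1-z)^{a+b-c} · ₂F₁(a, b; c; z) = Γ(c)Γ(a+b-c)/(Γ(a)Γ(b)). -/
open Filter

/-- The Gauss hypergeometric function `₂F₁(a,b;c;z)`, defined via the Gauss series
`Σ_{n=0}^∞ (a)_n (b)_n / ((c)_n n!) z^n`, written with Gamma functions. -/
noncomputable def hyp2F1 (a b c : ℂ) (z : ℂ) : ℂ :=
  (Complex.Gamma c / (Complex.Gamma a * Complex.Gamma b)) *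
    ∑' n : ℕ, Complex.Gamma (a + n) * Complex.Gamma (b + n) /
      (Complex.Gamma (c + n) * (n.factorial : ℂ)) * z ^ n

/-!
Put `s = a + b - c`, so `0 < Re s`. The `n`-th Gauss coefficient equals
`Γ(s) (s)_n / n! · R_n` with `R_n = Γ(a+n)Γ(b+n) / (Γ(c+n)Γ(s+n))`, and `R_n → 1` by Gauss's
product formula for `Γ`, because `a + b = c + s`. The weights `(1-z)^s (s)_n zⁿ / n!` sum to `1`
(binomial series), have total modulus at most `Γ(Re s) / |Γ(s)|` (since `|Γ(w)| ≤ Γ(Re w)`), and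
each of them tends to `0` as `z → 1⁻`. By the Silverman–Toeplitz theorem the corresponding
averages of `R_n` tend to `1`, which is the claim after multiplying by `Γ(c)Γ(s) / (Γ(a)Γ(b))`.
-/

open Topology

section Toeplitz

variable {ι : Type*} {l : Filter ι}

theorem tendsto_tsum_mul_of_tendsto_zero {u : ι → ℕ → ℝ} {g : ℕ → ℝ} {K : ℝ}
    (hu : ∀ i n, 0 ≤ u i n) (hg : ∀ n, 0 ≤ g n)
    (hK : ∀ᶠ i in l, Summable (u i) ∧ ∑' n, u i n ≤ K)
    (hcol : ∀ n, Tendsto (u · n) l (𝓝 0)) (hg0 : Tendsto g atTop (𝓝 0)) :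
    Tendsto (fun i => ∑' n, u i n * g n) l (𝓝 0) := by
  obtain ⟨B, hB⟩ := hg0.bddAbove_range
  replace hB : ∀ n, g n ≤ B := fun n => hB ⟨n, rfl⟩
  rw [Metric.tendsto_nhds]
  intro ε hε
  set δ := ε / (2 * (|K| + 1))
  have hδ : 0 < δ := by positivity
  have hδK : δ * K ≤ ε / 2 := by
    calc δ * K ≤ δ * (|K| + 1) := by gcongr; linarith [le_abs_self K]
      _ = ε / 2 := by simp only [δ]; field_simp
  obtain ⟨N, hN⟩ := Metric.tendsto_atTop.1 hg0 δ hδ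
  have hhead : Tendsto (fun i => ∑ n ∈ Finset.range N, u i n * B) l (𝓝 0) := by
    simpa using tendsto_finsetSum _ fun n _ => (hcol n).mul_const B
  filter_upwards [hK, hhead.eventually (gt_mem_nhds (half_pos hε))] with i ⟨hsum, hle⟩ hsmall
  have hprod : Summable (fun n => u i n * g n) :=
    (hsum.mul_right B).of_nonneg_of_le (fun n => mul_nonneg (hu i n) (hg n))
      fun n => mul_le_mul_of_nonneg_left (hB n) (hu i n)
  have htail : ∑' n, u i (n + N) * g (n + N) ≤ δ * K := by
    calc ∑' n, u i (n + N) * g (n + N) ≤ ∑' n, δ * u i (n + N) := by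
          refine ((summable_nat_add_iff N).2 hprod).tsum_le_tsum (fun n => ?_)
            (((summable_nat_add_iff N).2 hsum).mul_left δ)
          have := hN (n + N) (Nat.le_add_left N n)
          rw [Real.dist_0_eq_abs, abs_of_nonneg (hg _)] at this
          nlinarith [hu i (n + N)]
      _ ≤ δ * ∑' n, u i n := by
          rw [tsum_mul_left, ← hsum.sum_add_tsum_nat_add N]
          exact mul_le_mul_of_nonneg_left
            (le_add_of_nonneg_left (Finset.sum_nonneg fun n _ => hu i n)) hδ.le
      _ ≤ δ * K := mul_le_mul_of_nonneg_left hle hδ.le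
  have hhead_le := Finset.sum_le_sum fun n (_ : n ∈ Finset.range N) =>
    mul_le_mul_of_nonneg_left (hB n) (hu i n)
  rw [Real.dist_0_eq_abs, abs_of_nonneg (tsum_nonneg fun n => mul_nonneg (hu i n) (hg n)),
    ← hprod.sum_add_tsum_nat_add N]
  linarith

/-- The Silverman–Toeplitz theorem, for summation methods indexed by a filter. -/
theorem tendsto_tsum_smul_of_tendsto {𝕜 E : Type*} [NormedField 𝕜] [NormedAddCommGroup E]
    [NormedSpace 𝕜 E] [CompleteSpace E] {k : ι → ℕ → 𝕜} {K : ℝ} {F : ℕ → E} {L : E}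
    (hk : ∀ᶠ i in l, HasSum (k i) 1)
    (hK : ∀ᶠ i in l, Summable (fun n => ‖k i n‖) ∧ ∑' n, ‖k i n‖ ≤ K)
    (hcol : ∀ n, Tendsto (k · n) l (𝓝 0)) (hF : Tendsto F atTop (𝓝 L)) :
    Tendsto (fun i => ∑' n, k i n • F n) l (𝓝 L) := by
  obtain ⟨B, hB⟩ := (hF.sub_const L).norm.bddAbove_range
  have hnorm := tendsto_tsum_mul_of_tendsto_zero (fun i n => norm_nonneg (k i n))
    (fun n => norm_nonneg (F n - L)) hK (fun n => by simpa using (hcol n).norm)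
    (by simpa using (hF.sub_const L).norm)
  rw [tendsto_iff_norm_sub_tendsto_zero]
  refine squeeze_zero' (Eventually.of_forall fun i => norm_nonneg _) ?_ hnorm
  filter_upwards [hk, hK] with i hsum ⟨hsumnorm, _⟩
  have hprod : Summable (fun n => ‖k i n‖ * ‖F n - L‖) :=
    (hsumnorm.mul_right B).of_nonneg_of_le (fun n => by positivity)
      fun n => mul_le_mul_of_nonneg_left (hB ⟨n, rfl⟩) (norm_nonneg _)
  have hdiff : HasSum (fun n => k i n • (F n - L)) (∑' n, k i n • (F n - L)) :=
    (Summable.of_norm (by simpa only [norm_smul] using hprod)).hasSum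
  have hsmul : HasSum (fun n => k i n • F n) (∑' n, k i n • (F n - L) + L) := by
    simpa [smul_sub] using hdiff.add (hsum.smul_const L)
  rw [hsmul.tsum_eq, add_sub_cancel_right]
  simpa only [norm_smul] using
    norm_tsum_le_tsum_norm (f := fun n => k i n • (F n - L)) (by simpa only [norm_smul] using hprod)

end Toeplitz

theorem ascPochhammer_eval_eq_prod_range {R : Type*} [CommSemiring R] (n : ℕ) (r : R) :
    (ascPochhammer R n).eval r = ∏ j ∈ Finset.range n, (r + j) := by
  induction n with
  | zero => simp
  | succ n ih => rw [ascPochhammer_succ_eval, ih, Finset.prod_range_succ]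

theorem Ring.choose_add_sub_one_eq_ascPochhammer_div {K : Type*} [Field K] [CharZero K]
    (s : K) (n : ℕ) :
    Ring.choose (s + n - 1) n = (ascPochhammer K n).eval s / n.factorial := by
  rw [← Ring.multichoose_eq, eq_div_iff (by exact_mod_cast n.factorial_ne_zero), mul_comm,
    ← nsmul_eq_mul, Ring.factorial_nsmul_multichoose_eq_ascPochhammer,
    Polynomial.ascPochhammer_smeval_eq_eval]

theorem Complex.hasSum_ascPochhammer_div_factorial_mul_pow (s : ℂ) {z : ℂ} (hz : ‖z‖ < 1) :
    HasSum (fun n => (ascPochhammer ℂ n).eval s / n.factorial * z ^ n) (1 / (1 - z) ^ s) := by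
  have hz' : z ∈ Metric.eball 0 1 := by
    simpa [enorm_eq_nnnorm, ← NNReal.coe_lt_one] using hz
  simpa [FormalMultilinearSeries.ofScalars_apply_eq, Ring.choose_add_sub_one_eq_ascPochhammer_div,
    mul_comm] using (Complex.one_div_one_sub_cpow_hasFPowerSeriesOnBall_zero s).hasSum hz'

theorem Real.hasSum_ascPochhammer_div_factorial_mul_pow (σ : ℝ) {z : ℝ} (hz : |z| < 1) :
    HasSum (fun n => (ascPochhammer ℝ n).eval σ / n.factorial * z ^ n) (1 / (1 - z) ^ σ) := by
  have hz' : z ∈ Metric.eball 0 1 := by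
    simpa [enorm_eq_nnnorm, ← NNReal.coe_lt_one] using hz
  simpa [FormalMultilinearSeries.ofScalars_apply_eq, Ring.choose_add_sub_one_eq_ascPochhammer_div,
    mul_comm] using (Real.one_div_one_sub_rpow_hasFPowerSeriesOnBall_zero σ).hasSum hz'

theorem Complex.ne_neg_natCast_of_re_pos {s : ℂ} (hs : 0 < s.re) (m : ℕ) : s ≠ -m := by
  rintro rfl
  simp only [Complex.neg_re, Complex.natCast_re, Left.neg_pos_iff] at hs
  exact (Nat.cast_nonneg m).not_gt hs

theorem Complex.norm_Gamma_le_Gamma_re {s : ℂ} (hs : 0 < s.re) :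
    ‖Complex.Gamma s‖ ≤ Real.Gamma s.re := by
  rw [Complex.Gamma_eq_integral hs, Real.Gamma_eq_integral hs, Complex.GammaIntegral]
  refine (MeasureTheory.norm_integral_le_integral_norm _).trans_eq
    (MeasureTheory.setIntegral_congr_fun measurableSet_Ioi fun x hx => ?_)
  rw [norm_mul, Complex.norm_real, Real.norm_of_nonneg (Real.exp_pos _).le,
    Complex.norm_cpow_eq_rpow_re_of_pos hx]
  simp

theorem Real.Gamma_add_nat_eq_mul_ascPochhammer {σ : ℝ} (hσ : 0 < σ) (n : ℕ) :
    Real.Gamma (σ + n) = Real.Gamma σ * (ascPochhammer ℝ n).eval σ := by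
  induction n with
  | zero => simp
  | succ n ih =>
    rw [Nat.cast_succ, ← add_assoc, Real.Gamma_add_one (by positivity), ih,
      ascPochhammer_succ_eval]
    ring

theorem Complex.norm_ascPochhammer_eval_le {s : ℂ} (hs : 0 < s.re) (n : ℕ) :
    ‖(ascPochhammer ℂ n).eval s‖ ≤
      Real.Gamma s.re / ‖Complex.Gamma s‖ * (ascPochhammer ℝ n).eval s.re := by
  have hΓ : 0 < ‖Complex.Gamma s‖ := norm_pos_iff.2 (Complex.Gamma_ne_zero_of_re_pos hs)
  rw [← Complex.Gamma_add_nat_div_Gamma_eq s (Complex.ne_neg_natCast_of_re_pos hs), norm_div,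
    div_mul_eq_mul_div, ← Real.Gamma_add_nat_eq_mul_ascPochhammer hs]
  gcongr
  simpa using Complex.norm_Gamma_le_Gamma_re (s := s + n) (by simp; positivity)

theorem Complex.tendsto_Gamma_add_nat_add_one_div_cpow_mul_factorial {x : ℂ}
    (hx : ∀ m : ℕ, x ≠ -m) :
    Tendsto (fun n : ℕ => Complex.Gamma (x + (n + 1)) / ((n : ℂ) ^ x * n.factorial)) atTop
      (𝓝 1) := by
  have hΓ := Complex.Gamma_ne_zero hx
  have hseq : ∀ n : ℕ, n ≠ 0 → Complex.Gamma x / Complex.GammaSeq x n =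
      Complex.Gamma (x + (n + 1)) / ((n : ℂ) ^ x * n.factorial) := by
    intro n hn
    have hpow : (n : ℂ) ^ x ≠ 0 := by simp [Complex.cpow_eq_zero_iff, hn]
    have hprod := Complex.Gamma_add_nat_div_Gamma_eq (n := n + 1) x hx
    rw [ascPochhammer_eval_eq_prod_range, Nat.cast_succ] at hprod
    rw [Complex.GammaSeq, ← hprod]
    field_simp
  have hlim := (tendsto_const_nhds (x := Complex.Gamma x)).div
    (Complex.GammaSeq_tendsto_Gamma x) hΓ
  rw [div_self hΓ] at hlim
  exact hlim.congr' (eventually_ne_atTop 0 |>.mono hseq)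

theorem Complex.tendsto_Gamma_mul_Gamma_div_Gamma_mul_Gamma {a b c d : ℂ} (habcd : a + b = c + d)
    (ha : ∀ m : ℕ, a ≠ -m) (hb : ∀ m : ℕ, b ≠ -m) (hc : ∀ m : ℕ, c ≠ -m)
    (hd : ∀ m : ℕ, d ≠ -m) :
    Tendsto (fun n : ℕ => Complex.Gamma (a + n) * Complex.Gamma (b + n) /
      (Complex.Gamma (c + n) * Complex.Gamma (d + n))) atTop (𝓝 1) := by
  rw [← tendsto_add_atTop_iff_nat 1]
  have hlim := ((Complex.tendsto_Gamma_add_nat_add_one_div_cpow_mul_factorial ha).mul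
    (Complex.tendsto_Gamma_add_nat_add_one_div_cpow_mul_factorial hb)).div
    ((Complex.tendsto_Gamma_add_nat_add_one_div_cpow_mul_factorial hc).mul
    (Complex.tendsto_Gamma_add_nat_add_one_div_cpow_mul_factorial hd)) (by norm_num)
  rw [mul_one, div_one] at hlim
  refine hlim.congr' ((eventually_ne_atTop 0).mono fun n hn => ?_)
  have hn' : (n : ℂ) ≠ 0 := Nat.cast_ne_zero.2 hn
  have hpow : (n : ℂ) ^ a * (n : ℂ) ^ b = (n : ℂ) ^ c * (n : ℂ) ^ d := by
    rw [← Complex.cpow_add _ _ hn', ← Complex.cpow_add _ _ hn', habcd]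
  have hc0 : (n : ℂ) ^ c ≠ 0 := by simp [Complex.cpow_eq_zero_iff, hn]
  have hd0 : (n : ℂ) ^ d ≠ 0 := by simp [Complex.cpow_eq_zero_iff, hn]
  have hf : (n.factorial : ℂ) ≠ 0 := by exact_mod_cast n.factorial_ne_zero
  simp only [Pi.div_apply, div_mul_div_comm, mul_mul_mul_comm _ (n.factorial : ℂ), hpow]
  push_cast
  exact div_div_div_cancel_right₀ (mul_ne_zero (mul_ne_zero hc0 hd0) (mul_ne_zero hf hf)) _ _

noncomputable def binomialKernel (s : ℂ) (z : ℝ) (n : ℕ) : ℂ :=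
  (1 - z) ^ s * ((ascPochhammer ℂ n).eval s / n.factorial * z ^ n)

theorem hasSum_binomialKernel (s : ℂ) {z : ℝ} (hz : |z| < 1) :
    HasSum (binomialKernel s z) 1 := by
  have hne : (1 - (z : ℂ)) ^ s ≠ 0 := by
    rw [Ne, Complex.cpow_eq_zero_iff, sub_eq_zero, ← Complex.ofReal_one, Complex.ofReal_inj]
    exact fun h => by simp [← h.1] at hz
  have := (Complex.hasSum_ascPochhammer_div_factorial_mul_pow s
    (by rwa [Complex.norm_real, Real.norm_eq_abs])).mul_left ((1 - (z : ℂ)) ^ s)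
  rwa [mul_one_div_cancel hne] at this

theorem norm_binomialKernel_le {s : ℂ} (hs : 0 < s.re) {z : ℝ} (hz0 : 0 ≤ z) (hz1 : z < 1)
    (n : ℕ) : ‖binomialKernel s z n‖ ≤ Real.Gamma s.re / ‖Complex.Gamma s‖ *
      ((1 - z) ^ s.re * ((ascPochhammer ℝ n).eval s.re / n.factorial * z ^ n)) := by
  have h1z : (1 - (z : ℂ)) = ((1 - z : ℝ) : ℂ) := by push_cast; ring
  rw [binomialKernel, norm_mul, norm_mul, norm_div, h1z,
    Complex.norm_cpow_eq_rpow_re_of_pos (by linarith), norm_pow, Complex.norm_real,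
    Real.norm_of_nonneg hz0, Complex.norm_natCast]
  calc (1 - z) ^ s.re * (‖(ascPochhammer ℂ n).eval s‖ / n.factorial * z ^ n)
      ≤ (1 - z) ^ s.re * (Real.Gamma s.re / ‖Complex.Gamma s‖ * (ascPochhammer ℝ n).eval s.re /
          n.factorial * z ^ n) := by
        have : 0 ≤ (1 - z) ^ s.re := Real.rpow_nonneg (by linarith) _
        gcongr
        exact Complex.norm_ascPochhammer_eval_le hs n
    _ = _ := by ring

theorem summable_norm_binomialKernel {s : ℂ} (hs : 0 < s.re) {z : ℝ} (hz0 : 0 ≤ z)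
    (hz1 : z < 1) :
    Summable (fun n => ‖binomialKernel s z n‖) ∧
      ∑' n, ‖binomialKernel s z n‖ ≤ Real.Gamma s.re / ‖Complex.Gamma s‖ := by
  have hreal : HasSum (fun n => (1 - z) ^ s.re * ((ascPochhammer ℝ n).eval s.re / n.factorial *
      z ^ n)) 1 := by
    have h1z : (1 - z) ^ s.re ≠ 0 := (Real.rpow_pos_of_pos (by linarith) _).ne'
    simpa [h1z] using (Real.hasSum_ascPochhammer_div_factorial_mul_pow s.re
      (abs_lt.2 ⟨by linarith, hz1⟩)).mul_left ((1 - z) ^ s.re)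
  have hdom := hreal.mul_left (Real.Gamma s.re / ‖Complex.Gamma s‖)
  rw [mul_one] at hdom
  have hsum : Summable (fun n => ‖binomialKernel s z n‖) :=
    hdom.summable.of_nonneg_of_le (fun n => norm_nonneg _) (norm_binomialKernel_le hs hz0 hz1)
  exact ⟨hsum, hdom.tsum_eq ▸ hsum.tsum_le_tsum (norm_binomialKernel_le hs hz0 hz1) hdom.summable⟩

theorem tendsto_binomialKernel {s : ℂ} (hs : 0 < s.re) (n : ℕ) :
    Tendsto (binomialKernel s · n) (𝓝[<] 1) (𝓝 0) := by
  have hbase : Tendsto (fun z : ℝ => 1 - (z : ℂ)) (𝓝 1) (𝓝 0) := by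
    simpa using (tendsto_const_nhds (x := (1 : ℂ))).sub (Complex.continuous_ofReal.tendsto 1)
  have hpow : Tendsto (fun z : ℝ => (1 - (z : ℂ)) ^ s) (𝓝 1) (𝓝 0) := by
    have hs0 : s ≠ 0 := fun h => by simp [h] at hs
    simpa [Function.comp_def, Complex.zero_cpow hs0] using
      (Complex.continuousAt_cpow_zero_of_re_pos hs).tendsto.comp
        (hbase.prodMk_nhds tendsto_const_nhds)
  have hcoef : Continuous fun z : ℝ => (ascPochhammer ℂ n).eval s / n.factorial * (z : ℂ) ^ n := by
    fun_prop
  have := (hpow.mul (hcoef.tendsto 1)).mono_left (nhdsWithin_le_nhds (s := Set.Iio 1))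
  rwa [zero_mul] at this

theorem tendsto_one_sub_cpow_mul_tsum_ascPochhammer {s : ℂ} (hs : 0 < s.re) {F : ℕ → ℂ}
    {L : ℂ} (hF : Tendsto F atTop (𝓝 L)) :
    Tendsto (fun z : ℝ => (1 - (z : ℂ)) ^ s *
      ∑' n, (ascPochhammer ℂ n).eval s / n.factorial * F n * z ^ n) (𝓝[<] 1) (𝓝 L) := by
  have hIoo : ∀ᶠ z : ℝ in 𝓝[<] 1, z ∈ Set.Ioo 0 1 := Ioo_mem_nhdsLT zero_lt_one
  have := tendsto_tsum_smul_of_tendsto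
    (hIoo.mono fun z hz => hasSum_binomialKernel s (abs_lt.2 ⟨by linarith [hz.1], hz.2⟩))
    (hIoo.mono fun z hz => summable_norm_binomialKernel hs hz.1.le hz.2)
    (tendsto_binomialKernel hs) hF
  refine this.congr fun z => ?_
  rw [← tsum_mul_left]
  exact tsum_congr fun n => by simp only [binomialKernel, smul_eq_mul]; ring

theorem Complex.Gamma_mul_Gamma_div_Gamma_mul_factorial_eq_Gamma_mul {a b c s : ℂ}
    (hs : 0 < s.re) (n : ℕ) :
    Complex.Gamma (a + n) * Complex.Gamma (b + n) / (Complex.Gamma (c + n) * n.factorial) =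
      Complex.Gamma s * ((ascPochhammer ℂ n).eval s / n.factorial *
        (Complex.Gamma (a + n) * Complex.Gamma (b + n) /
          (Complex.Gamma (c + n) * Complex.Gamma (s + n)))) := by
  have hΓs := Complex.Gamma_ne_zero_of_re_pos hs
  have hΓsn := Complex.Gamma_ne_zero_of_re_pos (s := s + n) (by simp; positivity)
  rw [← Complex.Gamma_add_nat_div_Gamma_eq s (Complex.ne_neg_natCast_of_re_pos hs)]
  field_simp

/-- Asymptotics of `₂F₁` near `z = 1`: if `Re(c-a-b) < 0` then
`(1-z)^{a+b-c} ₂F₁(a,b;c;z) → Γ(c)Γ(a+b-c)/(Γ(a)Γ(b))` as `z → 1⁻`. -/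
theorem hyp2F1_asymptotic_near_one (a b c : ℂ)
    (h : (c - a - b).re < 0)
    (ha : ∀ n : ℕ, a ≠ -(n : ℂ)) (hb : ∀ n : ℕ, b ≠ -(n : ℂ)) (hc : ∀ n : ℕ, c ≠ -(n : ℂ)) :
    Tendsto (fun z : ℝ => ((1 : ℂ) - (z : ℂ)) ^ (a + b - c) * hyp2F1 a b c z)
      (nhdsWithin 1 (Set.Iio 1))
      (nhds (Complex.Gamma c * Complex.Gamma (a + b - c) /
        (Complex.Gamma a * Complex.Gamma b))) := by
  set s := a + b - c
  have hs : 0 < s.re := by simp only [s, Complex.sub_re, Complex.add_re] at h ⊢; linarith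
  have hR := Complex.tendsto_Gamma_mul_Gamma_div_Gamma_mul_Gamma (d := s) (by ring) ha hb hc
    (Complex.ne_neg_natCast_of_re_pos hs)
  have hlim := (tendsto_one_sub_cpow_mul_tsum_ascPochhammer hs hR).const_mul
    (Complex.Gamma c * Complex.Gamma s / (Complex.Gamma a * Complex.Gamma b))
  rw [mul_one] at hlim
  refine hlim.congr fun z => ?_
  simp_rw [hyp2F1, Complex.Gamma_mul_Gamma_div_Gamma_mul_factorial_eq_Gamma_mul (c := c) hs,
    mul_assoc, tsum_mul_left]
  ring
end
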